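/- For every c ∈ [0, 2π] there exists an inspection trajectory with horizon T = W(c) that is feasible for the arc [0,c]; that is, there is a 1-Lipschitz map γ : [0, W(c)] → ℝ² with γ(0) = (0,0) such that for every φ ∈ [0,c] there exists t ∈ [0, W(c)] with γ(t) inspecting P_φ. -/

import Mathlib

open Real Set

/-- The point of the unit circle at angle `φ`. -/
noncomputable def Ppt (φ : ℝ) : EuclideanSpace ℝ (Fin 2) := WithLp.toLp 2 ![Real.cos φ, Real.sin φ]

/-- `A` inspects the perimeter point `P_φ` if no convex combination of `A` and `P_φ`
lies in the open unit disk. -/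
def Inspects (A : EuclideanSpace ℝ (Fin 2)) (φ : ℝ) : Prop :=
  ∀ s ∈ Set.Icc (0:ℝ) 1, 1 ≤ ‖(1 - s) • A + s • Ppt φ‖


/-- The optimal worst-case inspection cost for an arc of length `c`. -/
noncomputable def W (c : ℝ) : ℝ :=
  if c ≤ 2 * π / 3 then 1 / Real.cos (c / 2)
  else if c ≤ 5 * π / 6 then 1 - 2 * Real.cos c
  else 1 + Real.sqrt 3 + c - 5 * π / 6


/-! A point `A` inspects `P_φ` as soon as it lies beyond the tangent at `P_φ`, i.e.
`1 ≤ ⟪A, P_φ⟫`, and the trajectories are explicit polygons. For `c ≤ 2π/3`, walk straight to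
the corner `P_{c/2} / cos (c/2)` of the tangents at the two ends of the arc. For
`2π/3 < c ≤ 5π/6`, walk to the corner `P_{π-c} / cos (π-c)`, which sees `[0, 2π - 2c]`, then in
direction `P_c` until the tangent at `P_c` is reached; that point also lies beyond the tangent at
`P_{c-π/2}` and so sees `[c - π/2, c]`. For larger `c`, walk to the corner seeing `[0, π/3]`,
along the tangent to `P_{π/3}`, around the circle to `P_{c-π/2}`, and one unit in direction
`P_c`, which reaches the corner of the tangents at `P_{c-π/2}` and `P_c`. -/

open scoped RealInnerProductSpace

lemma norm_Ppt (φ : ℝ) : ‖Ppt φ‖ = 1 := by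
  simp [Ppt, EuclideanSpace.norm_eq, Fin.sum_univ_two]

lemma inner_Ppt (α β : ℝ) : ⟪Ppt α, Ppt β⟫ = cos (α - β) := by
  simp [Ppt, PiLp.inner_apply, Fin.sum_univ_two, cos_sub]
  ring

lemma Ppt_add (θ ψ : ℝ) : Ppt (θ + ψ) = cos ψ • Ppt θ + sin ψ • Ppt (θ + π / 2) := by
  ext i
  fin_cases i <;> simp [Ppt, cos_add, sin_add] <;> ring

lemma dist_Ppt_le (x y : ℝ) : dist (Ppt x) (Ppt y) ≤ dist x y := by
  have hsq : dist (Ppt x) (Ppt y) ^ 2 = 2 - 2 * cos (x - y) := by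
    rw [dist_eq_norm, ← real_inner_self_eq_norm_sq, inner_sub_sub_self, inner_Ppt, inner_Ppt,
      inner_Ppt, inner_Ppt, ← neg_sub x y, cos_neg]
    simp only [sub_self, cos_zero]
    ring
  have hcos : 1 - (x - y) ^ 2 / 2 ≤ cos (x - y) := one_sub_sq_div_two_le_cos
  rw [← abs_of_nonneg dist_nonneg, Real.dist_eq]
  exact sq_le_sq.mp (by rw [hsq]; linarith)

lemma lipschitzWith_one_Ppt_add (k : ℝ) : LipschitzWith 1 fun t : ℝ => Ppt (t + k) :=
  .mk_one fun x y => (dist_Ppt_le _ _).trans_eq (dist_add_right x y k)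

lemma one_le_cos_add_sin {ψ : ℝ} (hψ : ψ ∈ Icc 0 (π / 2)) : 1 ≤ cos ψ + sin ψ := by
  have hcos : 0 ≤ cos ψ := cos_nonneg_of_mem_Icc ⟨by linarith [pi_pos, hψ.1], hψ.2⟩
  have hsin : 0 ≤ sin ψ := sin_nonneg_of_nonneg_of_le_pi hψ.1 (by linarith [pi_pos, hψ.2])
  nlinarith [sin_sq_add_cos_sq ψ, mul_nonneg hcos hsin]

lemma lipschitzWith_one_add_sub_smul {E : Type*} [SeminormedAddCommGroup E] [NormedSpace ℝ E]
    (A v : E) (t₀ : ℝ) (hv : ‖v‖ ≤ 1) : LipschitzWith 1 fun t : ℝ => A + (t - t₀) • v := by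
  refine LipschitzWith.mk_one fun x y => ?_
  rw [dist_eq_norm, add_sub_add_left_eq_sub, ← sub_smul, sub_sub_sub_cancel_right, norm_smul,
    Real.dist_eq, Real.norm_eq_abs]
  exact mul_le_of_le_one_right (abs_nonneg _) hv

lemma lipschitzWith_one_smul_Ppt (α : ℝ) : LipschitzWith 1 fun t : ℝ => t • Ppt α := by
  simpa using lipschitzWith_one_add_sub_smul 0 (Ppt α) 0 (norm_Ppt α).le

theorem LipschitzWith.ite_le {α : Type*} [PseudoMetricSpace α] {K : NNReal} {f g : ℝ → α}
    {b : ℝ} (hf : LipschitzWith K f) (hg : LipschitzWith K g) (hb : f b = g b) :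
    LipschitzWith K fun t => if t ≤ b then f t else g t := by
  have across : ∀ x y, x ≤ b → b < y → dist (f x) (g y) ≤ K * dist x y := fun x y hx hy =>
    calc dist (f x) (g y) ≤ dist (f x) (f b) + dist (g b) (g y) := hb ▸ dist_triangle _ _ _
      _ ≤ K * dist x b + K * dist b y := add_le_add (hf.dist_le_mul x b) (hg.dist_le_mul b y)
      _ = K * dist x y := by
        rw [← mul_add, Real.dist_eq, Real.dist_eq, Real.dist_eq, abs_of_nonpos (by linarith),
          abs_of_neg (by linarith), abs_of_neg (by linarith)]
        ring
  refine LipschitzWith.of_dist_le_mul fun x y => ?_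
  by_cases hx : x ≤ b <;> by_cases hy : y ≤ b <;> simp only [hx, hy, if_true, if_false]
  · exact hf.dist_le_mul x y
  · exact across x y hx (not_le.mp hy)
  · rw [dist_comm, dist_comm x]
    exact across y x hy (not_le.mp hx)
  · exact hg.dist_le_mul x y

section

variable {A : EuclideanSpace ℝ (Fin 2)} {φ : ℝ}

lemma Inspects.of_one_le_inner (h : 1 ≤ ⟪A, Ppt φ⟫) : Inspects A φ := by
  rintro s ⟨hs₀, hs₁⟩
  have hinner : ⟪(1 - s) • A + s • Ppt φ, Ppt φ⟫ = (1 - s) * ⟪A, Ppt φ⟫ + s := by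
    rw [inner_add_left, real_inner_smul_left, real_inner_smul_left, inner_Ppt, sub_self,
      cos_zero, mul_one]
  calc 1 ≤ (1 - s) * ⟪A, Ppt φ⟫ + s := by nlinarith
    _ = ⟪(1 - s) • A + s • Ppt φ, Ppt φ⟫ := hinner.symm
    _ ≤ ‖(1 - s) • A + s • Ppt φ‖ := by simpa [norm_Ppt] using real_inner_le_norm _ (Ppt φ)

lemma inspects_Ppt_self (φ : ℝ) : Inspects (Ppt φ) φ :=
  .of_one_le_inner (by rw [inner_Ppt, sub_self, cos_zero])

lemma inspects_inv_cos_smul_Ppt {α β : ℝ} (hβ : β < π / 2) (hφ : |φ - α| ≤ β) :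
    Inspects ((cos β)⁻¹ • Ppt α) φ := by
  have hcos : 0 < cos β := cos_pos_of_mem_Ioo ⟨by linarith [abs_nonneg (φ - α), pi_pos], hβ⟩
  refine .of_one_le_inner ?_
  rw [real_inner_smul_left, inner_Ppt, inv_mul_eq_div, one_le_div hcos, ← cos_abs (α - φ),
    abs_sub_comm]
  exact cos_le_cos_of_nonneg_of_le_pi (abs_nonneg _) (by linarith [pi_pos]) hφ

lemma inspects_of_one_le_inner_Ppt_sub_pi_div_two {θ : ℝ}
    (h₁ : 1 ≤ ⟪A, Ppt (θ - π / 2)⟫) (h₂ : 1 ≤ ⟪A, Ppt θ⟫) (hφ : φ ∈ Icc (θ - π / 2) θ) :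
    Inspects A φ := by
  obtain ⟨ψ, hψ, rfl⟩ : ∃ ψ ∈ Icc 0 (π / 2), φ = θ - π / 2 + ψ :=
    ⟨φ - (θ - π / 2), ⟨by linarith [hφ.1], by linarith [hφ.2]⟩, by ring⟩
  refine .of_one_le_inner ?_
  rw [Ppt_add, sub_add_cancel, inner_add_right, real_inner_smul_right, real_inner_smul_right]
  have hcos : 0 ≤ cos ψ := cos_nonneg_of_mem_Icc ⟨by linarith [pi_pos, hψ.1], hψ.2⟩
  have hsin : 0 ≤ sin ψ := sin_nonneg_of_nonneg_of_le_pi hψ.1 (by linarith [pi_pos, hψ.2])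
  nlinarith [one_le_cos_add_sin hψ]

end

def HasFeasibleTrajectory (c T : ℝ) : Prop :=
  ∃ γ : ℝ → EuclideanSpace ℝ (Fin 2), LipschitzWith 1 γ ∧ γ 0 = 0 ∧
    ∀ φ ∈ Icc 0 c, ∃ t ∈ Icc 0 T, Inspects (γ t) φ

theorem hasFeasibleTrajectory_of_le_two_pi_div_three {c : ℝ} (hc : c ≤ 2 * π / 3) :
    HasFeasibleTrajectory c (1 / cos (c / 2)) := by
  refine ⟨fun t => t • Ppt (c / 2), lipschitzWith_one_smul_Ppt _, zero_smul _ _,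
    fun φ hφ => ?_⟩
  have hc₂ : c / 2 < π / 2 := by linarith [pi_pos]
  have hcos : 0 < cos (c / 2) := cos_pos_of_mem_Ioo ⟨by linarith [hφ.1, hφ.2, pi_pos], hc₂⟩
  refine ⟨1 / cos (c / 2), ⟨by positivity, le_rfl⟩, ?_⟩
  rw [one_div]
  exact inspects_inv_cos_smul_Ppt hc₂ (abs_le.mpr ⟨by linarith [hφ.1], by linarith [hφ.2]⟩)

theorem hasFeasibleTrajectory_of_mem_Ioc {c : ℝ} (hc : c ∈ Ioc (2 * π / 3) (5 * π / 6)) :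
    HasFeasibleTrajectory c (1 - 2 * cos c) := by
  obtain ⟨hc₁, hc₂⟩ := hc
  have hcos : cos c < -(1 / 2) := by
    have := cos_lt_cos_of_nonneg_of_le_pi (by positivity) (by linarith [pi_pos]) hc₁
    rwa [show 2 * π / 3 = π - π / 3 by ring, cos_pi_sub, cos_pi_div_three] at this
  have hsin : 1 / 2 ≤ sin c := by
    have := sin_le_sin_of_le_of_le_pi_div_two (by linarith [pi_pos]) (by linarith [pi_pos])
      (show π / 6 ≤ π - c by linarith)
    rwa [sin_pi_div_six, sin_pi_sub] at this
  set r := (cos (π - c))⁻¹ with hr_def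
  have hrcos : r * cos c = -1 := by
    rw [hr_def, cos_pi_sub, inv_neg, neg_mul, inv_mul_cancel₀ (by linarith)]
  have hr : 0 < r := by nlinarith
  have hrT : r < 1 - 2 * cos c := by nlinarith
  set F := r • Ppt (π - c) + (1 - 2 * cos c - r) • Ppt c
  have hF₁ : 1 ≤ ⟪F, Ppt (c - π / 2)⟫ := by
    rw [inner_add_left, real_inner_smul_left, real_inner_smul_left, inner_Ppt, inner_Ppt,
      show π - c - (c - π / 2) = π - 2 * c + π / 2 by ring, cos_add_pi_div_two, sin_pi_sub,
      sin_two_mul, show c - (c - π / 2) = π / 2 by ring, cos_pi_div_two]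
    nlinarith
  have hF₂ : 1 ≤ ⟪F, Ppt c⟫ := by
    rw [inner_add_left, real_inner_smul_left, real_inner_smul_left, inner_Ppt, inner_Ppt,
      show π - c - c = π - 2 * c by ring, cos_pi_sub, cos_two_mul, sub_self, cos_zero]
    nlinarith
  refine ⟨fun t => if t ≤ r then t • Ppt (π - c) else r • Ppt (π - c) + (t - r) • Ppt c,
    (lipschitzWith_one_smul_Ppt _).ite_le
      (lipschitzWith_one_add_sub_smul _ _ _ (norm_Ppt c).le) (by simp),
    by simp [hr.le], fun φ hφ => ?_⟩
  by_cases hφr : φ ≤ 2 * π - 2 * c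
  · refine ⟨r, ⟨hr.le, hrT.le⟩, ?_⟩
    simp only [le_rfl, if_true]
    exact inspects_inv_cos_smul_Ppt (by linarith) (abs_le.mpr ⟨by linarith [hφ.1], by linarith⟩)
  · refine ⟨1 - 2 * cos c, ⟨by linarith, le_rfl⟩, ?_⟩
    simp only [if_neg (not_le.mpr hrT)]
    exact inspects_of_one_le_inner_Ppt_sub_pi_div_two hF₁ hF₂ ⟨by linarith, hφ.2⟩

lemma two_div_sqrt_three_smul_Ppt_pi_div_six :
    (2 / √3) • Ppt (π / 6) = Ppt (π / 3) + (2 / √3 - √3) • Ppt (5 * π / 6) := by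
  have h3 : √3 ^ 2 = 3 := sq_sqrt (by norm_num)
  have hcos : cos (5 * π / 6) = -(√3 / 2) := by
    rw [show 5 * π / 6 = π - π / 6 by ring, cos_pi_sub, cos_pi_div_six]
  have hsin : sin (5 * π / 6) = 1 / 2 := by
    rw [show 5 * π / 6 = π - π / 6 by ring, sin_pi_sub, sin_pi_div_six]
  ext i
  fin_cases i <;>
    simp [Ppt, hcos, hsin, cos_pi_div_six, sin_pi_div_six, cos_pi_div_three,
      sin_pi_div_three] <;>
    field_simp <;> nlinarith [h3]

lemma two_div_sqrt_three_lt_sqrt_three : 2 / √3 < √3 := by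
  rw [div_lt_iff₀ (by positivity), mul_self_sqrt (by norm_num)]
  norm_num

noncomputable def cornerArcTrajectory (c t : ℝ) : EuclideanSpace ℝ (Fin 2) :=
  if t ≤ 2 / √3 then t • Ppt (π / 6)
  else if t ≤ √3 then Ppt (π / 3) + (t - √3) • Ppt (5 * π / 6)
  else if t ≤ √3 + (c - 5 * π / 6) then Ppt (t + (π / 3 - √3))
  else Ppt (c - π / 2) + (t - (√3 + (c - 5 * π / 6))) • Ppt c

lemma lipschitzWith_one_cornerArcTrajectory {c : ℝ} (hc : 5 * π / 6 ≤ c) :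
    LipschitzWith 1 (cornerArcTrajectory c) := by
  refine (lipschitzWith_one_smul_Ppt _).ite_le (LipschitzWith.ite_le
    (lipschitzWith_one_add_sub_smul _ _ _ (norm_Ppt _).le) (LipschitzWith.ite_le
      (lipschitzWith_one_Ppt_add _)
      (lipschitzWith_one_add_sub_smul _ _ _ (norm_Ppt _).le) ?_) ?_) ?_
  · rw [sub_self, zero_smul, add_zero]
    ring_nf
  · simp [show √3 ≤ √3 + (c - 5 * π / 6) by linarith]
  · simp [two_div_sqrt_three_lt_sqrt_three.le, two_div_sqrt_three_smul_Ppt_pi_div_six]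

theorem hasFeasibleTrajectory_of_five_pi_div_six_lt {c : ℝ} (hc : 5 * π / 6 < c) :
    HasFeasibleTrajectory c (1 + √3 + c - 5 * π / 6) := by
  have hsqrt : 0 < √3 := by positivity
  have hcorner := two_div_sqrt_three_lt_sqrt_three
  refine ⟨cornerArcTrajectory c, lipschitzWith_one_cornerArcTrajectory hc.le,
    by simp [cornerArcTrajectory, (by positivity : (0 : ℝ) ≤ 2 / √3)], fun φ hφ => ?_⟩
  unfold cornerArcTrajectory
  by_cases hφ₁ : φ ≤ π / 3
  · refine ⟨2 / √3, ⟨by positivity, by linarith⟩, ?_⟩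
    rw [if_pos le_rfl, show 2 / √3 = (cos (π / 6))⁻¹ by rw [cos_pi_div_six, inv_div]]
    exact inspects_inv_cos_smul_Ppt (by linarith [pi_pos])
      (abs_le.mpr ⟨by linarith [hφ.1], by linarith⟩)
  by_cases hφ₂ : φ ≤ c - π / 2
  · refine ⟨φ - π / 3 + √3, ⟨by linarith [hφ.1], by linarith⟩, ?_⟩
    rw [if_neg (not_le.mpr (by linarith)), if_neg (not_le.mpr (by linarith)),
      if_pos (by linarith), show φ - π / 3 + √3 + (π / 3 - √3) = φ by ring]
    exact inspects_Ppt_self φ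
  refine ⟨1 + √3 + c - 5 * π / 6, ⟨by linarith [pi_pos], le_rfl⟩, ?_⟩
  rw [if_neg (not_le.mpr (by linarith [pi_pos])), if_neg (not_le.mpr (by linarith [pi_pos])),
    if_neg (not_le.mpr (by linarith)), show 1 + √3 + c - 5 * π / 6 - (√3 + (c - 5 * π / 6)) = 1
    by ring, one_smul]
  refine inspects_of_one_le_inner_Ppt_sub_pi_div_two ?_ ?_ ⟨by linarith, hφ.2⟩ <;>
    simp only [inner_add_left, inner_Ppt, sub_self, cos_zero, sub_sub_cancel,
      sub_sub_cancel_left, cos_neg, cos_pi_div_two, add_zero, zero_add, le_rfl]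

theorem partial_inspection_upper_bound_general (c : ℝ) :
    ∃ γ : ℝ → EuclideanSpace ℝ (Fin 2),
      LipschitzOnWith 1 γ (Set.Icc 0 (W c)) ∧ γ 0 = 0 ∧
      ∀ φ ∈ Set.Icc 0 c, ∃ t ∈ Set.Icc 0 (W c), Inspects (γ t) φ := by
  obtain ⟨γ, hγ, hγ₀, hfeasible⟩ : HasFeasibleTrajectory c (W c) := by
    unfold W
    split_ifs with h₁ h₂
    · exact hasFeasibleTrajectory_of_le_two_pi_div_three h₁
    · exact hasFeasibleTrajectory_of_mem_Ioc ⟨not_le.mp h₁, h₂⟩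
    · exact hasFeasibleTrajectory_of_five_pi_div_six_lt (not_le.mp h₂)
  exact ⟨γ, hγ.lipschitzOnWith, hγ₀, hfeasible⟩

theorem partial_inspection_upper_bound (c : ℝ) (hc : c ∈ Set.Icc 0 (2*π)) :
    ∃ γ : ℝ → EuclideanSpace ℝ (Fin 2),
      LipschitzOnWith 1 γ (Set.Icc 0 (W c)) ∧ γ 0 = 0 ∧
      ∀ φ ∈ Set.Icc 0 c, ∃ t ∈ Set.Icc 0 (W c), Inspects (γ t) φ :=
  partial_inspection_upper_bound_general c
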